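/- Let A, B be rings and M an (A,B)-bimodule. The full subcategory 𝓜(A-Mod, M, B-Mod) of Rep(A,M,B) — consisting of all triples (X,Y,φ) with φ : M⊗_B Y → X injective — is a resolving subcategory of Rep(A,M,B) if and only if M is a flat right B-module. -/

import Mathlib

set_option linter.unusedSectionVars false

open MulOpposite

universe u

section RepT

variable (A B M : Type u) [Ring A] [Ring B]
  [AddCommGroup M] [Module A M] [Module Bᵐᵒᵖ M] [SMulCommClass A Bᵐᵒᵖ M]

/-- Data exhibiting an `A`-module `T` as the tensor product `M ⊗_B Y` of the
`(A,B)`-bimodule `M` with a left `B`-module `Y`, i.e. a `B`-balanced, `A`-compatible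
biadditive map `τ : M × Y → T` which is universal among such maps. -/
structure TensorData (Y : Type u) [AddCommGroup Y] [Module B Y] where
  T : Type u
  [addT : AddCommGroup T]
  [modT : Module A T]
  τ : M → Y → T
  add_left : ∀ m m' y, τ (m + m') y = τ m y + τ m' y
  add_right : ∀ m y y', τ m (y + y') = τ m y + τ m y'
  balanced : ∀ (b : B) m y, τ (op b • m) y = τ m (b • y)
  smul_left : ∀ (a : A) m y, τ (a • m) y = a • τ m y
  universal : ∀ (Z : Type u) [AddCommGroup Z] [Module A Z] (β : M → Y → Z),
    (∀ m m' y, β (m + m') y = β m y + β m' y) →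
    (∀ m y y', β m (y + y') = β m y + β m y') →
    (∀ (b : B) m y, β (op b • m) y = β m (b • y)) →
    (∀ (a : A) m y, β (a • m) y = a • β m y) →
    ∃! h : T →ₗ[A] Z, ∀ m y, h (τ m y) = β m y

attribute [instance] TensorData.addT TensorData.modT

/-- An object of the category `Rep(A,M,B)` (equivalent to the category of left modules
over the triangular matrix ring `[[A,M],[0,B]]`): a triple `(X, Y, φ)` where `X` is a
left `A`-module, `Y` a left `B`-module and `φ : M ⊗_B Y → X` is `A`-linear; the tensor
product `M ⊗_B Y` is recorded via its universal property. -/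
structure RepObj where
  X : Type u
  [addX : AddCommGroup X]
  [modX : Module A X]
  Y : Type u
  [addY : AddCommGroup Y]
  [modY : Module B Y]
  td : TensorData A B M Y
  φ : td.T →ₗ[A] X

attribute [instance] RepObj.addX RepObj.modX RepObj.addY RepObj.modY

variable {A B M}

/-- A morphism of `Rep(A,M,B)`: a pair `(f, g)` with `f ∘ φ₁ = φ₂ ∘ (1_M ⊗ g)`. -/
structure RepHom (T₁ T₂ : RepObj A B M) where
  f : T₁.X →ₗ[A] T₂.X
  g : T₁.Y →ₗ[B] T₂.Y
  comm : ∀ m y, f (T₁.φ (T₁.td.τ m y)) = T₂.φ (T₂.td.τ m (g y))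

/-- A short exact sequence in `Rep(A,M,B)` (exactness is componentwise). -/
structure RepSES (T₁ T₂ T₃ : RepObj A B M) where
  i : RepHom T₁ T₂
  p : RepHom T₂ T₃
  inj_f : Function.Injective i.f
  inj_g : Function.Injective i.g
  surj_f : Function.Surjective p.f
  surj_g : Function.Surjective p.g
  exact_f : LinearMap.range i.f = LinearMap.ker p.f
  exact_g : LinearMap.range i.g = LinearMap.ker p.g

/-- `P` is a projective object of `Rep(A,M,B)`: every morphism from `P` lifts along
every epimorphism (epimorphisms are the componentwise surjective morphisms). -/
def RepObj.IsProjObj (P : RepObj A B M) : Prop :=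
  ∀ (T₁ T₂ : RepObj A B M) (u : RepHom T₁ T₂),
    Function.Surjective u.f → Function.Surjective u.g →
    ∀ h : RepHom P T₂, ∃ h' : RepHom P T₁,
      (∀ x, u.f (h'.f x) = h.f x) ∧ (∀ y, u.g (h'.g y) = h.g y)

end RepT

section Resolving

variable {A B M : Type u} [Ring A] [Ring B]
  [AddCommGroup M] [Module A M] [Module Bᵐᵒᵖ M] [SMulCommClass A Bᵐᵒᵖ M]

/-- A predicate `P` on objects of `Rep(A,M,B)` defines a resolving subcategory:
it holds for all projective objects and is closed under direct summands, extensions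
and kernels of epimorphisms. -/
def RepResolving (P : RepObj A B M → Prop) : Prop :=
  (∀ T : RepObj A B M, T.IsProjObj → P T) ∧
  (∀ T₁ T₂ : RepObj A B M, P T₂ →
    (∃ (s : RepHom T₁ T₂) (r : RepHom T₂ T₁),
      (∀ x, r.f (s.f x) = x) ∧ (∀ y, r.g (s.g y) = y)) → P T₁) ∧
  (∀ (T₁ T₂ T₃ : RepObj A B M), RepSES T₁ T₂ T₃ → P T₁ → P T₃ → P T₂) ∧
  (∀ (T₁ T₂ T₃ : RepObj A B M), RepSES T₁ T₂ T₃ → P T₂ → P T₃ → P T₁)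

variable (A B M) in
/-- `M` is a flat right `B`-module: tensoring with `M` over `B` preserves injectivity
of `B`-linear maps (expressed via tensor products given by their universal property). -/
def MIsFlat : Prop :=
  ∀ (Y₁ Y₂ : Type u) [AddCommGroup Y₁] [Module B Y₁] [AddCommGroup Y₂] [Module B Y₂]
    (g : Y₁ →ₗ[B] Y₂), Function.Injective g →
    ∀ (D₁ : TensorData A B M Y₁) (D₂ : TensorData A B M Y₂) (h : D₁.T →ₗ[A] D₂.T),
      (∀ m y, h (D₁.τ m y) = D₂.τ m (g y)) → Function.Injective h

/-! Flatness is exactly what is needed for kernels of epimorphisms: for `Y₁ ↪ Y₂` the triples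
`(im(M ⊗ Y₁ → M ⊗ Y₂), Y₁)`, `(M ⊗ Y₂, Y₂)`, `(M ⊗ Y₂ / im, Y₂ / Y₁)` form a short exact sequence
whose last two terms lie in `𝓜` (the last because `M ⊗_B -` is right exact), so closure under
kernels of epimorphisms makes `M ⊗ Y₁ → M ⊗ Y₂` injective. Conversely, the structure maps of
extensions are injective by right exactness and a diagram chase, those of kernels by flatness,
and `𝓜` contains every triple admitting morphisms `T → T' → T` in `Rep(A,M,B)` that compose to
the identity on `Y`, for some `T'` in `𝓜`; this covers summands, and projectives, which are
retracts of `(X ⊕ M ⊗ Y, Y, inr)`. -/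

variable (A B) in
structure IsBalancedMap {Y Z : Type*} [AddCommGroup Y] [Module B Y] [AddCommGroup Z]
    [Module A Z] (β : M → Y → Z) : Prop where
  add_left : ∀ m m' y, β (m + m') y = β m y + β m' y
  add_right : ∀ m y y', β m (y + y') = β m y + β m y'
  balanced : ∀ (b : B) m y, β (op b • m) y = β m (b • y)
  smul_left : ∀ (a : A) m y, β (a • m) y = a • β m y

namespace IsBalancedMap

variable {Y Y' Z Z' : Type*} [AddCommGroup Y] [Module B Y] [AddCommGroup Y'] [Module B Y']
  [AddCommGroup Z] [Module A Z] [AddCommGroup Z'] [Module A Z'] {β : M → Y → Z}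

theorem map_sub_right (hβ : IsBalancedMap A B β) (m : M) (y y' : Y) :
    β m (y - y') = β m y - β m y' :=
  map_sub (AddMonoidHom.mk' (β m) (hβ.add_right m)) y y'

theorem map_zero_right (hβ : IsBalancedMap A B β) (m : M) : β m 0 = 0 :=
  map_zero (AddMonoidHom.mk' (β m) (hβ.add_right m))

theorem compr₂ (hβ : IsBalancedMap A B β) (f : Z →ₗ[A] Z') :
    IsBalancedMap A B (fun m y => f (β m y)) where
  add_left m m' y := by rw [hβ.add_left, map_add]
  add_right m y y' := by rw [hβ.add_right, map_add]
  balanced b m y := by rw [hβ.balanced]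
  smul_left a m y := by rw [hβ.smul_left, map_smul]

theorem compl₂ (hβ : IsBalancedMap A B β) (g : Y' →ₗ[B] Y) :
    IsBalancedMap A B (fun m y => β m (g y)) where
  add_left m m' y := hβ.add_left m m' (g y)
  add_right m y y' := by rw [map_add, hβ.add_right]
  balanced b m y := by rw [hβ.balanced, map_smul]
  smul_left a m y := hβ.smul_left a m (g y)

theorem of_compl₂_surjective {β : M → Y' → Z} {g : Y →ₗ[B] Y'} (hg : Function.Surjective g)
    (hβ : IsBalancedMap A B (fun m y => β m (g y))) : IsBalancedMap A B β where
  add_left m m' y := by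
    obtain ⟨x, rfl⟩ := hg y
    exact hβ.add_left m m' x
  add_right m y y' := by
    obtain ⟨x, rfl⟩ := hg y
    obtain ⟨x', rfl⟩ := hg y'
    rw [← map_add]
    exact hβ.add_right m x x'
  balanced b m y := by
    obtain ⟨x, rfl⟩ := hg y
    rw [← map_smul]
    exact hβ.balanced b m x
  smul_left a m y := by
    obtain ⟨x, rfl⟩ := hg y
    exact hβ.smul_left a m x

end IsBalancedMap

namespace TensorData

variable {Y₁ Y₂ Y₃ : Type u} [AddCommGroup Y₁] [Module B Y₁] [AddCommGroup Y₂] [Module B Y₂]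
  [AddCommGroup Y₃] [Module B Y₃] {Z : Type u} [AddCommGroup Z] [Module A Z]

theorem isBalancedMap_τ (D : TensorData A B M Y₁) : IsBalancedMap A B D.τ :=
  ⟨D.add_left, D.add_right, D.balanced, D.smul_left⟩

theorem existsUnique_lift (D : TensorData A B M Y₁) {β : M → Y₁ → Z}
    (hβ : IsBalancedMap A B β) : ∃! h : D.T →ₗ[A] Z, ∀ m y, h (D.τ m y) = β m y :=
  D.universal Z β hβ.add_left hβ.add_right hβ.balanced hβ.smul_left

theorem hom_ext (D : TensorData A B M Y₁) {h k : D.T →ₗ[A] Z}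
    (H : ∀ m y, h (D.τ m y) = k (D.τ m y)) : h = k :=
  (D.existsUnique_lift (D.isBalancedMap_τ.compr₂ h)).unique (fun _ _ => rfl)
    (fun m y => (H m y).symm)

noncomputable def map (D₁ : TensorData A B M Y₁) (D₂ : TensorData A B M Y₂)
    (g : Y₁ →ₗ[B] Y₂) : D₁.T →ₗ[A] D₂.T :=
  (D₁.existsUnique_lift (D₂.isBalancedMap_τ.compl₂ g)).exists.choose

@[simp]
theorem map_τ (D₁ : TensorData A B M Y₁) (D₂ : TensorData A B M Y₂) (g : Y₁ →ₗ[B] Y₂)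
    (m : M) (y : Y₁) : D₁.map D₂ g (D₁.τ m y) = D₂.τ m (g y) :=
  (D₁.existsUnique_lift (D₂.isBalancedMap_τ.compl₂ g)).exists.choose_spec m y

theorem map_id (D : TensorData A B M Y₁) : D.map D LinearMap.id = LinearMap.id :=
  D.hom_ext fun m y => by simp

theorem map_comp_map (D₁ : TensorData A B M Y₁) (D₂ : TensorData A B M Y₂)
    (D₃ : TensorData A B M Y₃) (g : Y₁ →ₗ[B] Y₂) (g' : Y₂ →ₗ[B] Y₃) :
    D₂.map D₃ g' ∘ₗ D₁.map D₂ g = D₁.map D₃ (g' ∘ₗ g) :=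
  D₁.hom_ext fun m y => by simp

theorem injective_map_of_leftInverse (D₁ : TensorData A B M Y₁) (D₂ : TensorData A B M Y₂)
    {g : Y₁ →ₗ[B] Y₂} {g' : Y₂ →ₗ[B] Y₁} (hg : Function.LeftInverse g' g) :
    Function.Injective (D₁.map D₂ g) := by
  refine Function.LeftInverse.injective (g := D₂.map D₁ g') fun t => ?_
  rw [← LinearMap.comp_apply, map_comp_map, show g' ∘ₗ g = LinearMap.id from LinearMap.ext hg,
    map_id, LinearMap.id_apply]

section Cokernel

variable (D₁ : TensorData A B M Y₁) (D₂ : TensorData A B M Y₂) {gi : Y₁ →ₗ[B] Y₂}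
  {gp : Y₂ →ₗ[B] Y₃} (hgp : Function.Surjective gp) (hex : LinearMap.range gi = LinearMap.ker gp)

/-- The tensor map `m ⊗ y₃` of `M ⊗ Y₃ ≅ M ⊗ Y₂ / im (M ⊗ Y₁)` for exact `Y₁ → Y₂ → Y₃ → 0`,
read off a chosen preimage of `y₃`. -/
noncomputable def cokernelτ (gi : Y₁ →ₗ[B] Y₂) :
    M → Y₃ → D₂.T ⧸ LinearMap.range (D₁.map D₂ gi) :=
  fun m y => (LinearMap.range (D₁.map D₂ gi)).mkQ (D₂.τ m (Function.surjInv hgp y))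

include hex in
theorem mkQ_τ_eq_of_map_eq {m : M} {u v : Y₂} (huv : gp u = gp v) :
    (LinearMap.range (D₁.map D₂ gi)).mkQ (D₂.τ m u) =
      (LinearMap.range (D₁.map D₂ gi)).mkQ (D₂.τ m v) := by
  rw [← sub_eq_zero, ← map_sub, ← D₂.isBalancedMap_τ.map_sub_right, Submodule.mkQ_apply,
    Submodule.Quotient.mk_eq_zero]
  obtain ⟨y, hy⟩ : u - v ∈ LinearMap.range gi := by
    rw [hex, LinearMap.mem_ker, map_sub, huv, sub_self]
  exact ⟨D₁.τ m y, by rw [map_τ, hy]⟩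

include hex in
theorem cokernelτ_apply (m : M) (y : Y₂) :
    cokernelτ D₁ D₂ hgp gi m (gp y) = (LinearMap.range (D₁.map D₂ gi)).mkQ (D₂.τ m y) :=
  mkQ_τ_eq_of_map_eq D₁ D₂ hex (Function.surjInv_eq hgp (gp y))

include hex in
theorem isBalancedMap_cokernelτ : IsBalancedMap A B (cokernelτ D₁ D₂ hgp gi) := by
  refine IsBalancedMap.of_compl₂_surjective hgp ?_
  simp only [cokernelτ_apply D₁ D₂ hgp hex]
  exact D₂.isBalancedMap_τ.compr₂ _

include hex in
theorem existsUnique_lift_cokernelτ {β : M → Y₃ → Z} (hβ : IsBalancedMap A B β) :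
    ∃! k : (D₂.T ⧸ LinearMap.range (D₁.map D₂ gi)) →ₗ[A] Z,
      ∀ m y, k (cokernelτ D₁ D₂ hgp gi m y) = β m y := by
  obtain ⟨k₂, hk₂, -⟩ := D₂.existsUnique_lift (hβ.compl₂ gp)
  have hgpgi : gp ∘ₗ gi = 0 := LinearMap.range_le_ker_iff.mp hex.le
  have hN : LinearMap.range (D₁.map D₂ gi) ≤ LinearMap.ker k₂ := by
    refine LinearMap.range_le_ker_iff.mpr (D₁.hom_ext fun m y => ?_)
    rw [LinearMap.comp_apply, map_τ, hk₂, ← LinearMap.comp_apply gp gi, hgpgi,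
      LinearMap.zero_apply, hβ.map_zero_right, LinearMap.zero_apply]
  have hlift : ∀ m y, (LinearMap.range (D₁.map D₂ gi)).liftQ k₂ hN
      ((LinearMap.range (D₁.map D₂ gi)).mkQ (D₂.τ m y)) = β m (gp y) := by
    simp [hk₂]
  refine ⟨(LinearMap.range (D₁.map D₂ gi)).liftQ k₂ hN, fun m y => ?_, fun k hk => ?_⟩
  · obtain ⟨y, rfl⟩ := hgp y
    rw [cokernelτ_apply D₁ D₂ hgp hex, hlift]
  · refine Submodule.linearMap_qext _ (D₂.hom_ext fun m y => ?_)
    rw [LinearMap.comp_apply, LinearMap.comp_apply, ← cokernelτ_apply D₁ D₂ hgp hex, hk,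
      cokernelτ_apply D₁ D₂ hgp hex, hlift]

include hgp hex in
/-- Right exactness of `M ⊗_B -`: the cokernel of `M ⊗ Y₁ → M ⊗ Y₂` is a tensor product
`M ⊗ Y₃`. -/
noncomputable def cokernel : TensorData A B M Y₃ where
  T := D₂.T ⧸ LinearMap.range (D₁.map D₂ gi)
  τ := cokernelτ D₁ D₂ hgp gi
  add_left := (isBalancedMap_cokernelτ D₁ D₂ hgp hex).add_left
  add_right := (isBalancedMap_cokernelτ D₁ D₂ hgp hex).add_right
  balanced := (isBalancedMap_cokernelτ D₁ D₂ hgp hex).balanced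
  smul_left := (isBalancedMap_cokernelτ D₁ D₂ hgp hex).smul_left
  universal _ _ _ _ h₁ h₂ h₃ h₄ := existsUnique_lift_cokernelτ D₁ D₂ hgp hex ⟨h₁, h₂, h₃, h₄⟩

theorem map_cokernel : D₂.map (cokernel D₁ D₂ hgp hex) gp =
    (LinearMap.range (D₁.map D₂ gi)).mkQ :=
  D₂.hom_ext fun m y => by rw [map_τ]; exact cokernelτ_apply D₁ D₂ hgp hex m y

include hgp hex in
theorem ker_map_eq_range_map (D₃ : TensorData A B M Y₃) :
    LinearMap.ker (D₂.map D₃ gp) = LinearMap.range (D₁.map D₂ gi) := by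
  set D' := cokernel D₁ D₂ hgp hex
  have hfactor : D₂.map D₃ gp = D'.map D₃ LinearMap.id ∘ₗ D₂.map D' gp := by
    rw [map_comp_map, LinearMap.id_comp]
  have hiso : LinearMap.ker (D'.map D₃ LinearMap.id) = ⊥ :=
    LinearMap.ker_eq_bot.mpr (D'.injective_map_of_leftInverse D₃ (g' := LinearMap.id)
      fun _ => rfl)
  rw [hfactor, LinearMap.ker_comp_of_ker_eq_bot _ hiso, map_cokernel]
  exact Submodule.ker_mkQ _

end Cokernel

end TensorData

theorem RepHom.f_comp_φ {T₁ T₂ : RepObj A B M} (u : RepHom T₁ T₂) :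
    u.f ∘ₗ T₁.φ = T₂.φ ∘ₗ T₁.td.map T₂.td u.g :=
  T₁.td.hom_ext fun m y => by simp [u.comm]

theorem RepObj.injective_φ_of_retract {T₁ T₂ : RepObj A B M} (s : RepHom T₁ T₂)
    (r : RepHom T₂ T₁) (hg : ∀ y, r.g (s.g y) = y) (h₂ : Function.Injective T₂.φ) :
    Function.Injective T₁.φ := by
  have h := h₂.comp (T₁.td.injective_map_of_leftInverse T₂.td hg)
  rw [← LinearMap.coe_comp, ← s.f_comp_φ, LinearMap.coe_comp] at h
  exact h.of_comp

theorem RepObj.injective_φ_of_isProjObj {T : RepObj A B M} (hT : T.IsProjObj) :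
    Function.Injective T.φ := by
  -- `T` is a retract of `(X ⊕ M ⊗ Y, Y, inr)`.
  let T' : RepObj A B M :=
    { X := T.X × T.td.T, Y := T.Y, td := T.td, φ := LinearMap.inr A T.X T.td.T }
  let u : RepHom T' T :=
    { f := LinearMap.coprod LinearMap.id T.φ, g := LinearMap.id, comm := fun m y => by simp [T'] }
  obtain ⟨s, -, hs⟩ := hT T' T u (fun x => ⟨(x, 0), by simp [u, T']⟩) (fun y => ⟨y, rfl⟩)
    { f := LinearMap.id, g := LinearMap.id, comm := fun _ _ => rfl }
  exact injective_φ_of_retract s u hs fun _ _ h => congrArg Prod.snd h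

namespace RepSES

variable {T₁ T₂ T₃ : RepObj A B M}

theorem injective_φ_middle (S : RepSES T₁ T₂ T₃) (h₁ : Function.Injective T₁.φ)
    (h₃ : Function.Injective T₃.φ) : Function.Injective T₂.φ := by
  rw [injective_iff_map_eq_zero] at h₁ h₃ ⊢
  intro t ht
  have hpt : T₂.td.map T₃.td S.p.g t = 0 := h₃ _ <| by
    rw [← LinearMap.comp_apply, ← S.p.f_comp_φ, LinearMap.comp_apply, ht, map_zero]
  obtain ⟨t₁, rfl⟩ : t ∈ LinearMap.range (T₁.td.map T₂.td S.i.g) := by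
    rw [← TensorData.ker_map_eq_range_map T₁.td T₂.td S.surj_g S.exact_g T₃.td]
    exact hpt
  have ht₁ : T₁.φ t₁ = 0 := S.inj_f <| by
    rw [← LinearMap.comp_apply, S.i.f_comp_φ, LinearMap.comp_apply, ht, map_zero]
  rw [h₁ _ ht₁, map_zero]

theorem injective_φ_left_of_flat (hM : MIsFlat A B M) (S : RepSES T₁ T₂ T₃)
    (h₂ : Function.Injective T₂.φ) : Function.Injective T₁.φ := by
  have h := h₂.comp (hM _ _ S.i.g S.inj_g T₁.td T₂.td _ (T₁.td.map_τ T₂.td S.i.g))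
  rw [← LinearMap.coe_comp, ← S.i.f_comp_φ, LinearMap.coe_comp] at h
  exact h.of_comp

end RepSES

theorem mIsFlat_of_injective_φ_left
    (H : ∀ T₁ T₂ T₃ : RepObj A B M, RepSES T₁ T₂ T₃ →
      Function.Injective T₂.φ → Function.Injective T₃.φ → Function.Injective T₁.φ) :
    MIsFlat A B M := by
  intro Y₁ Y₂ _ _ _ _ g hg D₁ D₂ h hτ
  obtain rfl : h = D₁.map D₂ g := D₁.hom_ext fun m y => by rw [hτ, TensorData.map_τ]
  have hex : LinearMap.range g = LinearMap.ker (LinearMap.range g).mkQ :=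
    (Submodule.ker_mkQ _).symm
  let D₃ := TensorData.cokernel D₁ D₂ (Submodule.mkQ_surjective _) hex
  let T₁ : RepObj A B M :=
    { X := LinearMap.range (D₁.map D₂ g), Y := Y₁, td := D₁, φ := (D₁.map D₂ g).rangeRestrict }
  let T₂ : RepObj A B M := { X := D₂.T, Y := Y₂, td := D₂, φ := LinearMap.id }
  let T₃ : RepObj A B M := { X := D₃.T, Y := Y₂ ⧸ LinearMap.range g, td := D₃, φ := LinearMap.id }
  let S : RepSES T₁ T₂ T₃ :=
    { i := { f := (LinearMap.range (D₁.map D₂ g)).subtype, g := g,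
             comm := fun m y => by simp [T₁, T₂] }
      p := { f := (LinearMap.range (D₁.map D₂ g)).mkQ, g := (LinearMap.range g).mkQ,
             comm := fun m y => (TensorData.cokernelτ_apply D₁ D₂ _ hex m y).symm }
      inj_f := Submodule.injective_subtype _
      inj_g := hg
      surj_f := Submodule.mkQ_surjective _
      surj_g := Submodule.mkQ_surjective _
      exact_f := by rw [Submodule.range_subtype]; exact (Submodule.ker_mkQ _).symm
      exact_g := hex }
  have h₁ : Function.Injective T₁.φ := H T₁ T₂ T₃ S Function.injective_id Function.injective_id
  exact fun t t' htt => h₁ (Subtype.ext htt)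

/-- Let `A`, `B` be rings and `M` an `(A,B)`-bimodule.  The full subcategory
`𝓜(A-Mod, M, B-Mod)` of `Rep(A,M,B)`, consisting of all triples `(X,Y,φ)` with
`φ : M ⊗_B Y → X` injective, is a resolving subcategory of `Rep(A,M,B)` if and only
if `M` is a flat right `B`-module. -/
theorem stmt15 :
    RepResolving (fun T : RepObj A B M => Function.Injective T.φ) ↔
      MIsFlat A B M :=
  ⟨fun h => mIsFlat_of_injective_φ_left h.2.2.2, fun hM =>
    ⟨fun _ => RepObj.injective_φ_of_isProjObj,
      fun _ _ h₂ ⟨s, r, _, hg⟩ => RepObj.injective_φ_of_retract s r hg h₂,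
      fun _ _ _ S h₁ h₃ => S.injective_φ_middle h₁ h₃,
      fun _ _ _ S h₂ _ => S.injective_φ_left_of_flat hM h₂⟩⟩

end Resolving
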